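/- arXiv:2309.14987 — 5 statements merged into one kernel-verified Lean document; each statement's English description precedes it below -/
import Mathlib

section
/- The set of nonzero integers is diophantine in ℤ: an integer x is nonzero if and only if there exist integers w₁, w₂, w₃, w₄ such that (w₁² + w₂² + w₃² + w₄² + 1 - x)(w₁² + w₂² + w₃² + w₄² + 1 + x) = 0. -/
theorem int_nonzero_diophantine (x : ℤ) :
    x ≠ 0 ↔ ∃ w₁ w₂ w₃ w₄ : ℤ,
      (w₁^2 + w₂^2 + w₃^2 + w₄^2 + 1 - x) * (w₁^2 + w₂^2 + w₃^2 + w₄^2 + 1 + x) = 0 := by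
  constructor
  · intro hx
    obtain ⟨a, b, c, d, habcd⟩ := Nat.sum_four_squares (x.natAbs - 1)
    refine ⟨a, b, c, d, ?_⟩
    have h1 : 1 ≤ x.natAbs := Nat.one_le_iff_ne_zero.mpr (Int.natAbs_ne_zero.mpr hx)
    have hsum : (a:ℤ)^2 + b^2 + c^2 + d^2 + 1 = x.natAbs := by
      have := congrArg (Nat.cast : ℕ → ℤ) habcd
      push_cast at this
      omega
    rcases Int.natAbs_eq x with h | h
    · apply mul_eq_zero_of_left; omega
    · apply mul_eq_zero_of_right; omega
  · rintro ⟨a, b, c, d, h⟩ rfl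
    have ha := sq_nonneg a
    have hb := sq_nonneg b
    have hc := sq_nonneg c
    have hd := sq_nonneg d
    rcases mul_eq_zero.mp h with h | h <;> omega
end

section
/- For a prime p and a prime l ≠ p, the formula ∃ y, 1 + p·x^l = y^l defines ℤ_p in ℚ_p: for x ∈ ℚ_p, there exists y ∈ ℚ_p with 1 + p·x^l = y^l if and only if x ∈ ℤ_p. -/
/-!
If `‖x‖ > 1`, then `p * x ^ l` dominates `1`, so the valuation of `1 + p * x ^ l` is
`1 + l * v(x)`, which is not divisible by `l`, whereas every nonzero `l`-th power has valuation
divisible by `l`. If `‖x‖ ≤ 1`, then `1 + p * x ^ l` lies in `1 + pℤ_p`, and Hensel's lemma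
applied to `X ^ l - c` at `1` produces an `l`-th root, since the derivative `l` is a unit of
`ℤ_p` when `l ≠ p`.
-/

open Polynomial

variable {p : ℕ} [Fact p.Prime]

namespace Padic

lemma valuation_eq_of_norm_eq {x y : ℚ_[p]} (hx : x ≠ 0) (h : ‖x‖ = ‖y‖) :
    x.valuation = y.valuation := by
  have hy : y ≠ 0 := norm_ne_zero_iff.mp (h ▸ norm_ne_zero_iff.mpr hx)
  have hp : (1 : ℝ) < p := mod_cast (Fact.out : p.Prime).one_lt
  rwa [norm_eq_zpow_neg_valuation hx, norm_eq_zpow_neg_valuation hy,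
    zpow_right_inj₀ (by positivity) hp.ne', neg_inj] at h

lemma valuation_one_add_of_valuation_neg {z : ℚ_[p]} (hz : z.valuation < 0) :
    (1 + z).valuation = z.valuation := by
  have hz1 : 1 < ‖z‖ := by rw [← not_le, norm_le_one_iff_val_nonneg, not_le]; exact hz
  have hz0 : z ≠ 0 := by rintro rfl; simp at hz
  refine (valuation_eq_of_norm_eq hz0 ?_).symm
  rw [add_eq_max_of_ne (by simpa using hz1.ne), norm_one, max_eq_right hz1.le]

theorem norm_le_one_of_one_add_mul_pow_eq_pow {l : ℕ} (hl : 2 ≤ l) {x y : ℚ_[p]}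
    (h : 1 + p * x ^ l = y ^ l) : ‖x‖ ≤ 1 := by
  by_contra! hx
  have hx0 : x ≠ 0 := by rintro rfl; norm_num at hx
  have hvx : x.valuation < 0 := by rwa [← not_le, norm_le_one_iff_val_nonneg, not_le] at hx
  have hv : ((p : ℚ_[p]) * x ^ l).valuation = 1 + l * x.valuation := by
    rw [valuation_mul (by simp [NeZero.ne]) (pow_ne_zero l hx0), valuation_p, valuation_pow]
  have hvy_eq : (l : ℤ) * y.valuation = 1 + l * x.valuation := by
    rw [← valuation_pow, ← h, valuation_one_add_of_valuation_neg (by rw [hv]; nlinarith), hv]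
  have hdvd : (l : ℤ) ∣ 1 := ⟨y.valuation - x.valuation, by linarith⟩
  have hl1 : (l : ℤ) ≤ 1 := Int.le_of_dvd one_pos hdvd
  omega

end Padic

namespace PadicInt

theorem exists_pow_eq_of_norm_sub_one_lt {n : ℕ} (hn : ¬p ∣ n) {c : ℤ_[p]}
    (hc : ‖c - 1‖ < 1) : ∃ z : ℤ_[p], z ^ n = c := by
  have hderiv : ‖(X ^ n - C c).derivative.aeval (1 : ℤ_[p])‖ = 1 := by
    simpa [derivative_X_pow, (Fact.out : p.Prime).coprime_iff_not_dvd] using hn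
  obtain ⟨z, hz, -⟩ := hensels_lemma (F := X ^ n - C c) (a := 1)
    (by rw [hderiv]; simpa [norm_sub_rev] using hc)
  exact ⟨z, sub_eq_zero.mp (by simpa using hz)⟩

end PadicInt

theorem padic_int_diophantine (p l : ℕ) [Fact p.Prime] (hl : l.Prime) (hlp : l ≠ p)
    (x : ℚ_[p]) :
    (∃ y : ℚ_[p], 1 + (p : ℚ_[p]) * x ^ l = y ^ l) ↔ ‖x‖ ≤ 1 := by
  refine ⟨fun ⟨y, hy⟩ ↦ Padic.norm_le_one_of_one_add_mul_pow_eq_pow hl.two_le hy, fun hx ↦ ?_⟩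
  obtain ⟨x, rfl⟩ : ∃ x' : ℤ_[p], (x' : ℚ_[p]) = x := ⟨⟨x, hx⟩, rfl⟩
  have hpl : ¬p ∣ l := fun h ↦ hlp ((Nat.prime_dvd_prime_iff_eq Fact.out hl).mp h).symm
  have hc : ‖(1 + p * x ^ l : ℤ_[p]) - 1‖ < 1 := by
    simpa using (PadicInt.norm_lt_one_iff_dvd _).mpr (dvd_mul_right (p : ℤ_[p]) (x ^ l))
  obtain ⟨z, hz⟩ := PadicInt.exists_pow_eq_of_norm_sub_one_lt hpl hc
  exact ⟨z, by simpa using (congrArg ((↑) : ℤ_[p] → ℚ_[p]) hz).symm⟩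
end

section
/- A rational number a is a square in ℚ if and only if a is a square in ℚ_p for every prime p and a is a square in ℝ. In other words, ℚ² = ℚ ∩ (ℝ² ∩ ⋂_p ℚ_p²). -/
/-!
A square in `ℝ` is nonnegative, and a square in `ℚ_[p]` has even valuation, so `a ≥ 0` and
`v_p(a)` is even for every prime `p`. For `a > 0` the natural number `n = num(a) · den(a)` equals
`a · den(a)²`, so all its `p`-adic valuations are even too; `n` is then a square by unique
factorization, and `a = n / den(a)²` is a square in `ℚ`.
-/

theorem Nat.isSquare_of_even_factorization {n : ℕ} (h : ∀ p, Even (n.factorization p)) :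
    IsSquare n := by
  rcases eq_or_ne n 0 with rfl | hn
  · exact IsSquare.zero
  refine ⟨n.factorization.prod fun p k => p ^ (k / 2), ?_⟩
  conv_lhs => rw [← Nat.prod_factorization_pow_eq_self hn]
  rw [Finsupp.prod, Finsupp.prod, ← Finset.prod_mul_distrib]
  refine Finset.prod_congr rfl fun p _ => ?_
  rw [← pow_add]
  congr 1
  obtain ⟨k, hk⟩ := h p
  omega

theorem Padic.even_padicValRat_of_isSquare {p : ℕ} [Fact p.Prime] {q : ℚ}
    (h : IsSquare (q : ℚ_[p])) : Even (padicValRat p q) := by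
  rcases eq_or_ne q 0 with rfl | hq
  · simp
  obtain ⟨c, hc⟩ := h
  have hc0 : c ≠ 0 := by
    rintro rfl
    exact hq (by exact_mod_cast (mul_zero (0 : ℚ_[p])) ▸ hc)
  rw [← Padic.valuation_ratCast, hc, Padic.valuation_mul hc0 hc0]
  exact ⟨c.valuation, rfl⟩

theorem Rat.isSquare_of_even_padicValRat {q : ℚ} (hq : 0 ≤ q)
    (h : ∀ (p : ℕ) [Fact p.Prime], Even (padicValRat p q)) : IsSquare q := by
  rcases hq.eq_or_lt with rfl | hq
  · exact IsSquare.zero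
  set n : ℕ := q.num.natAbs * q.den
  have hden : (q.den : ℚ) ≠ 0 := by exact_mod_cast q.den_nz
  have hn : (n : ℚ) = q * (q.den : ℚ) ^ 2 := by
    have hnum : (q.num.natAbs : ℚ) = q.num := by
      rw [Nat.cast_natAbs, Int.cast_abs,
        abs_of_nonneg (Int.cast_nonneg_iff.mpr (Rat.num_pos.mpr hq).le)]
    rw [Nat.cast_mul, hnum, ← Rat.mul_den_eq_num q, pow_two, mul_assoc]
  have hn_sq : IsSquare n := Nat.isSquare_of_even_factorization fun p => by
    by_cases hp : p.Prime
    · have : Fact p.Prime := ⟨hp⟩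
      rw [Nat.factorization_def n hp, ← Int.even_coe_nat, ← padicValRat.of_nat, hn,
        padicValRat.mul hq.ne' (pow_ne_zero 2 hden), padicValRat.pow]
      exact (h p).add (even_two.mul_right _)
    · simp [Nat.factorization_eq_zero_of_not_prime n hp]
  have hq_eq : q = n / (q.den : ℚ) ^ 2 := by
    rw [hn, mul_div_cancel_right₀ _ (pow_ne_zero 2 hden)]
  rw [hq_eq]
  exact (hn_sq.map (Nat.castRingHom ℚ)).div (IsSquare.sq _)

theorem rat_square_local_global (a : ℚ) :
    (∃ b : ℚ, a = b ^ 2) ↔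
      (∃ r : ℝ, (a : ℝ) = r ^ 2) ∧
        ∀ (p : ℕ) (_ : Fact p.Prime), ∃ c : ℚ_[p], (a : ℚ_[p]) = c ^ 2 := by
  constructor
  · rintro ⟨b, rfl⟩
    exact ⟨⟨b, by push_cast; rfl⟩, fun p _ => ⟨b, by push_cast; rfl⟩⟩
  · rintro ⟨⟨r, hr⟩, h_padic⟩
    have ha : 0 ≤ a := by exact_mod_cast hr ▸ sq_nonneg r
    rw [← isSquare_iff_exists_sq]
    exact Rat.isSquare_of_even_padicValRat ha fun p _ =>
      Padic.even_padicValRat_of_isSquare <| (isSquare_iff_exists_sq _).mpr (h_padic p ‹_›)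
end

section
/- For a prime p > 11, let U_p = { Tr_{F_{p²}/F_p}(β) : β ∈ F_{p²}, N_{F_{p²}/F_p}(β) = 1 } ⊆ F_p be the set of traces of norm-one elements of the quadratic extension of F_p. Then U_p + U_p = F_p. -/
/-!
The norm `Lˣ → Kˣ` of a quadratic extension of finite fields with `#K = q` is surjective, so
the norm-one group has order `(q² - 1) / (q - 1) = q + 1`. By Cayley–Hamilton every `β` in it is
a root of `X² - Tr(β) X + 1`, so each trace is taken at most twice and there are at least
`(q + 1) / 2` traces of norm-one elements. A set `U ⊆ K` with `2 * #U > q` satisfies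
`U + U = K`, since `U` and `s - U` must meet.
-/

open Finset Polynomial Pointwise

theorem Algebra.sq_sub_trace_mul_add_norm_of_finrank_eq_two {R S : Type*} [CommRing R]
    [Nontrivial R] [CommRing S] [Algebra R S] [Module.Free R S] [Module.Finite R S]
    (h : Module.finrank R S = 2) (x : S) :
    x ^ 2 - algebraMap R S (Algebra.trace R S x) * x + algebraMap R S (Algebra.norm R x) = 0 := by
  classical
  let b := Module.finBasisOfFinrankEq R S h
  set M := Algebra.leftMulMatrix b x
  have hM : aeval x M.charpoly = 0 := by
    apply Algebra.leftMulMatrix_injective b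
    rw [← aeval_algHom_apply, Matrix.aeval_self_charpoly, map_zero]
  rwa [Matrix.charpoly_fin_two, ← Algebra.trace_eq_matrix_trace, ← Algebra.norm_eq_matrix_det,
    map_add, map_sub, map_mul, aeval_X_pow, aeval_X, aeval_C, aeval_C] at hM

theorem card_filter_quadratic_eq_zero_le_two {L : Type*} [CommRing L] [IsDomain L] [Fintype L]
    [DecidableEq L] (a b : L) : #{x | x ^ 2 - a * x + b = 0} ≤ 2 := by
  set q : L[X] := X ^ 2 - C a * X + C b
  have hq : q.natDegree = 2 := by unfold q; compute_degree!
  have hq0 : q ≠ 0 := ne_zero_of_natDegree_gt (n := 0) (by omega)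
  calc #{x | x ^ 2 - a * x + b = 0} ≤ #q.roots.toFinset := by
        refine card_le_card fun x hx => ?_
        simp only [mem_filter, mem_univ, true_and] at hx
        simpa [mem_roots hq0, q] using hx
    _ ≤ Multiset.card q.roots := Multiset.toFinset_card_le _
    _ ≤ 2 := hq ▸ card_roots' q

theorem Set.add_eq_univ_of_card_lt_ncard_add_ncard {G : Type*} [AddGroup G] [Finite G]
    {A B : Set G} (h : Nat.card G < A.ncard + B.ncard) : A + B = Set.univ := by
  classical
  have := Fintype.ofFinite G
  refine Set.eq_univ_of_forall fun g => ?_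
  have hcard : #(Finset.univ : Finset G) < #A.toFinset + #(B.toFinset.image (g - ·)) := by
    rwa [Finset.card_image_of_injective _ sub_right_injective, Finset.card_univ,
      ← Nat.card_eq_fintype_card, ← Set.ncard_eq_toFinset_card', ← Set.ncard_eq_toFinset_card']
  obtain ⟨a, ha⟩ :=
    inter_nonempty_of_card_lt_card_add_card (Finset.subset_univ _) (Finset.subset_univ _) hcard
  simp only [Finset.mem_inter, Set.mem_toFinset, Finset.mem_image] at ha
  obtain ⟨haA, b, hbB, rfl⟩ := ha
  exact Set.mem_add.mpr ⟨g - b, haA, b, hbB, sub_add_cancel g b⟩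

def normOneTraces (K L : Type*) [Field K] [Field L] [Algebra K L] : Set K :=
  {t | ∃ β : L, Algebra.norm K β = 1 ∧ Algebra.trace K L β = t}

namespace FiniteField

variable {K L : Type*} [Field K] [Field L] [Finite L] [Algebra K L]

theorem card_ker_unitsMap_norm (h : Module.finrank K L = 2) :
    Nat.card (Units.map (Algebra.norm K (S := L) : L →* K)).ker = Nat.card K + 1 := by
  have := Finite.of_injective _ (algebraMap K L).injective
  have hK : 1 < Nat.card K := Finite.one_lt_card
  have hmul := (Units.map (Algebra.norm K (S := L) : L →* K)).ker.card_mul_index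
  rw [Subgroup.index_ker, MonoidHom.range_eq_top.mpr (unitsMap_norm_surjective K L),
    Subgroup.card_top, Nat.card_units, Nat.card_units,
    Module.natCard_eq_pow_finrank (K := K) (V := L), h] at hmul
  refine Nat.eq_of_mul_eq_mul_right (Nat.sub_pos_of_lt hK) ?_
  rw [hmul, ← Nat.sq_sub_sq, one_pow]

theorem card_add_one_le_card_normOne (h : Module.finrank K L = 2) :
    Nat.card K + 1 ≤ Nat.card {x : L // Algebra.norm K x = 1} := by
  rw [← card_ker_unitsMap_norm h]
  refine Nat.card_le_card_of_injective (fun u => ⟨u.1.1, congrArg Units.val u.2⟩) ?_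
  intro u v huv
  exact Subtype.ext (Units.ext (congrArg Subtype.val huv))

theorem card_add_one_le_two_mul_ncard_normOneTraces (h : Module.finrank K L = 2) :
    Nat.card K + 1 ≤ 2 * (normOneTraces K L).ncard := by
  classical
  have := Fintype.ofFinite L
  set normOne : Finset L := {x | Algebra.norm K x = 1}
  have hnormOne : Nat.card {x : L // Algebra.norm K x = 1} = #normOne := by
    rw [Nat.card_eq_fintype_card, Fintype.card_subtype]
  have himage : normOneTraces K L = ↑(normOne.image (Algebra.trace K L)) := by
    ext; simp [normOneTraces, normOne]
  calc Nat.card K + 1 ≤ #normOne := hnormOne ▸ card_add_one_le_card_normOne h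
    _ ≤ 2 * #(normOne.image (Algebra.trace K L)) := by
      refine card_le_mul_card_image _ _ fun t _ => ?_
      refine le_trans (card_le_card fun x hx => ?_)
        (card_filter_quadratic_eq_zero_le_two (algebraMap K L t) 1)
      simp only [mem_filter, mem_univ, true_and, normOne] at hx ⊢
      simpa [hx.1, hx.2] using Algebra.sq_sub_trace_mul_add_norm_of_finrank_eq_two h x
    _ = 2 * (normOneTraces K L).ncard := by rw [himage, Set.ncard_coe_finset]

theorem normOneTraces_add_normOneTraces (h : Module.finrank K L = 2) :
    normOneTraces K L + normOneTraces K L = Set.univ := by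
  have := Finite.of_injective _ (algebraMap K L).injective
  apply Set.add_eq_univ_of_card_lt_ncard_add_ncard
  have := card_add_one_le_two_mul_ncard_normOneTraces h
  omega

end FiniteField

theorem Up_add_Up_general (p : ℕ) [Fact p.Prime] (s : ZMod p) :
    ∃ u v : ZMod p,
      u ∈ {t : ZMod p | ∃ β : GaloisField p 2,
          Algebra.norm (ZMod p) β = 1 ∧ Algebra.trace (ZMod p) (GaloisField p 2) β = t} ∧
      v ∈ {t : ZMod p | ∃ β : GaloisField p 2,
          Algebra.norm (ZMod p) β = 1 ∧ Algebra.trace (ZMod p) (GaloisField p 2) β = t} ∧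
      u + v = s := by
  have hs : s ∈ normOneTraces (ZMod p) (GaloisField p 2) +
      normOneTraces (ZMod p) (GaloisField p 2) := by
    rw [FiniteField.normOneTraces_add_normOneTraces (GaloisField.finrank p two_ne_zero)]
    exact Set.mem_univ s
  obtain ⟨u, hu, v, hv, huv⟩ := Set.mem_add.mp hs
  exact ⟨u, v, hu, hv, huv⟩

/-- For p > 11 prime, every element of 𝔽_p is the sum of two traces of
norm-one elements of 𝔽_{p²}. -/
theorem Up_add_Up (p : ℕ) [Fact p.Prime] (hp : 11 < p) (s : ZMod p) :
    ∃ u v : ZMod p,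
      u ∈ {t : ZMod p | ∃ β : GaloisField p 2,
          Algebra.norm (ZMod p) β = 1 ∧ Algebra.trace (ZMod p) (GaloisField p 2) β = t} ∧
      v ∈ {t : ZMod p | ∃ β : GaloisField p 2,
          Algebra.norm (ZMod p) β = 1 ∧ Algebra.trace (ZMod p) (GaloisField p 2) β = t} ∧
      u + v = s :=
  Up_add_Up_general p s
end

section
/- Let p be an odd prime and b an integer whose reduction mod p is a quadratic non-residue in F_p^×. Then the quaternion algebra H_{p,b} over ℚ_p is a division algebra (non-split), i.e., the quadratic form w² − p x² − b y² + p b z² is anisotropic over ℚ_p. -/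
/-!
If `b` reduces to a non-square mod `p`, then the binary form `u² - b v²` has no nontrivial zero
mod `p`, which forces `‖u² - b v²‖ = max ‖u‖ ‖v‖ ^ 2`: its nonzero values have even valuation.
A zero of `(w² - b y²) - p (x² - b z²)` would equate such an even valuation with an odd one.
-/

theorem PadicInt.norm_sq_sub_eq_one {p : ℕ} [Fact p.Prime] {b : ℤ_[p]}
    (hb : ¬IsSquare (PadicInt.toZMod b)) (c : ℤ_[p]) : ‖c ^ 2 - b‖ = 1 := by
  rw [← PadicInt.isUnit_iff, ← IsLocalRing.notMem_maximalIdeal, ← PadicInt.ker_toZMod,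
    RingHom.mem_ker, map_sub, map_pow, sub_eq_zero]
  exact fun h => hb ⟨PadicInt.toZMod c, by rw [← h, sq]⟩

namespace Padic

variable {p : ℕ} [Fact p.Prime]

theorem norm_sq_sub_eq_max {b : ℤ_[p]} (hb : ¬IsSquare (PadicInt.toZMod b)) (c : ℚ_[p]) :
    ‖c ^ 2 - b‖ = max 1 ‖c‖ ^ 2 := by
  rcases le_or_gt ‖c‖ 1 with hc | hc
  · obtain ⟨c, rfl⟩ : ∃ c' : ℤ_[p], (c' : ℚ_[p]) = c := ⟨⟨c, hc⟩, rfl⟩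
    rw [max_eq_left hc, one_pow, ← PadicInt.coe_pow, ← PadicInt.coe_sub, ← PadicInt.norm_def,
      PadicInt.norm_sq_sub_eq_one hb]
  · have hbc : ‖(b : ℚ_[p])‖ < ‖c ^ 2‖ := by
      rw [← PadicInt.norm_def, norm_pow]
      exact (PadicInt.norm_le_one b).trans_lt (one_lt_pow₀ hc two_ne_zero)
    rw [max_eq_right hc.le, sub_eq_add_neg, IsUltrametricDist.norm_add_eq_max_of_norm_ne_norm
      (by rw [norm_neg]; exact hbc.ne'), norm_neg, max_eq_left hbc.le, norm_pow]

theorem norm_sq_sub_mul_sq {b : ℤ_[p]} (hb : ¬IsSquare (PadicInt.toZMod b)) (u v : ℚ_[p]) :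
    ‖u ^ 2 - b * v ^ 2‖ = max ‖u‖ ‖v‖ ^ 2 := by
  rcases eq_or_ne v 0 with rfl | hv
  · simp
  have hv' : 0 < ‖v‖ := norm_pos_iff.mpr hv
  calc ‖u ^ 2 - b * v ^ 2‖ = ‖v‖ ^ 2 * ‖(u / v) ^ 2 - b‖ := by
        rw [← norm_pow, ← norm_mul]
        congr 1
        field_simp
    _ = max ‖u‖ ‖v‖ ^ 2 := by
        rw [norm_sq_sub_eq_max hb, ← mul_pow, mul_max_of_nonneg _ _ hv'.le, norm_div,
          mul_div_cancel₀ _ hv'.ne', mul_one, max_comm]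

theorem norm_sq_ne_norm_p_mul_norm_sq {a c : ℚ_[p]} (hc : c ≠ 0) :
    ‖a‖ ^ 2 ≠ ‖(p : ℚ_[p])‖ * ‖c‖ ^ 2 := by
  have hp : p.Prime := Fact.out
  have hp0 : (p : ℚ_[p]) ≠ 0 := by exact_mod_cast hp.ne_zero
  have hpc : (p : ℚ_[p]) * c ^ 2 ≠ 0 := mul_ne_zero hp0 (pow_ne_zero 2 hc)
  intro h
  rw [← norm_pow, ← norm_pow, ← norm_mul] at h
  have ha : a ^ 2 ≠ 0 := by
    rintro ha
    rw [ha, norm_zero, eq_comm, norm_eq_zero] at h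
    exact hpc h
  rw [norm_eq_zpow_neg_valuation ha, norm_eq_zpow_neg_valuation hpc,
    zpow_right_inj₀ (by exact_mod_cast hp.pos) (by exact_mod_cast hp.one_lt.ne'),
    valuation_mul hp0 (pow_ne_zero 2 hc), valuation_p, valuation_pow, valuation_pow] at h
  omega

end Padic

theorem quaternion_ramified_at_p_general (p : ℕ) [Fact p.Prime] (b : ℤ)
    (hb : ¬ IsSquare (b : ZMod p))
    (w x y z : ℚ_[p])
    (h : w ^ 2 - (p : ℚ_[p]) * x ^ 2 - (b : ℚ_[p]) * y ^ 2
        + (p : ℚ_[p]) * (b : ℚ_[p]) * z ^ 2 = 0) :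
    w = 0 ∧ x = 0 ∧ y = 0 ∧ z = 0 := by
  have hb' : ¬IsSquare (PadicInt.toZMod (b : ℤ_[p])) := by rwa [map_intCast]
  have hnorm : max ‖w‖ ‖y‖ ^ 2 = ‖(p : ℚ_[p])‖ * max ‖x‖ ‖z‖ ^ 2 := by
    rw [← Padic.norm_sq_sub_mul_sq hb', ← Padic.norm_sq_sub_mul_sq hb', ← norm_mul,
      PadicInt.coe_intCast]
    congr 1
    linear_combination h
  obtain ⟨a, ha⟩ : ∃ a : ℚ_[p], max ‖w‖ ‖y‖ = ‖a‖ :=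
    (max_choice ‖w‖ ‖y‖).elim (⟨w, ·⟩) (⟨y, ·⟩)
  obtain ⟨c, hc⟩ : ∃ c : ℚ_[p], max ‖x‖ ‖z‖ = ‖c‖ :=
    (max_choice ‖x‖ ‖z‖).elim (⟨x, ·⟩) (⟨z, ·⟩)
  rw [ha, hc] at hnorm
  obtain rfl : c = 0 := by_contra fun hc0 => Padic.norm_sq_ne_norm_p_mul_norm_sq hc0 hnorm
  obtain rfl : a = 0 := by simpa using hnorm
  rw [norm_zero] at ha hc
  obtain ⟨hw, hy⟩ := max_le_iff.mp ha.le
  obtain ⟨hx, hz⟩ := max_le_iff.mp hc.le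
  exact ⟨norm_le_zero_iff.mp hw, norm_le_zero_iff.mp hx, norm_le_zero_iff.mp hy,
    norm_le_zero_iff.mp hz⟩

theorem quaternion_ramified_at_p (p : ℕ) [Fact p.Prime] (hodd : p ≠ 2) (b : ℤ)
    (hb0 : (b : ZMod p) ≠ 0) (hb : ¬ IsSquare (b : ZMod p))
    (w x y z : ℚ_[p])
    (h : w ^ 2 - (p : ℚ_[p]) * x ^ 2 - (b : ℚ_[p]) * y ^ 2
        + (p : ℚ_[p]) * (b : ℚ_[p]) * z ^ 2 = 0) :
    w = 0 ∧ x = 0 ∧ y = 0 ∧ z = 0 :=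
  quaternion_ramified_at_p_general p b hb w x y z h
end
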